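/- Let G be a finite group and A a nontrivial normal subgroup of G such that A/M_G(A) is perfect. Then M_G(A) = M(A). -/

import Mathlib

/-- `B` is a `G`-invariant subgroup of `A`: a subgroup of `A` normalized by all of `G`. -/
def IsGInv (G : Type*) [Group G] (A B : Subgroup G) : Prop :=
  B ≤ A ∧ ∀ g : G, ∀ b ∈ B, g * b * g⁻¹ ∈ B

/-- `B` is a maximal proper `G`-invariant subgroup of `A`. -/
def IsMaxGInv (G : Type*) [Group G] (A B : Subgroup G) : Prop :=
  IsGInv G A B ∧ B < A ∧ ∀ C : Subgroup G, IsGInv G A C → C < A → B ≤ C → B = C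

/-- `M_G(A)`: the intersection of all maximal proper `G`-invariant subgroups of `A`. -/
def MG (G : Type*) [Group G] (A : Subgroup G) : Subgroup G :=
  sInf {B | IsMaxGInv G A B}

/-- `B` is a maximal proper normal subgroup of `A` (as subgroups of `G`). -/
def IsMaxNormalIn (G : Type*) [Group G] (A B : Subgroup G) : Prop :=
  (B ≤ A ∧ ∀ a ∈ A, ∀ b ∈ B, a * b * a⁻¹ ∈ B) ∧ B < A ∧
    ∀ C : Subgroup G, (C ≤ A ∧ ∀ a ∈ A, ∀ c ∈ C, a * c * a⁻¹ ∈ C) → C < A → B ≤ C → B = C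

/-- `M(A)`: the Mel'nikov subgroup (cosocle) of `A`, the intersection of all maximal
proper normal subgroups of `A`. -/
def Mel (G : Type*) [Group G] (A : Subgroup G) : Subgroup G :=
  sInf {B | IsMaxNormalIn G A B}

/-!
A maximal `G`-invariant subgroup `B` of `A` is the intersection of the maximal normal subgroups
of `A` containing `B`, because `G` permutes these by conjugation; hence `M(A) ≤ M_G(A)`.

Conversely, write `D = M_G(A)`. Since `A/D` is perfect, the normal subgroups `X` of `A` with
`D X = A` are closed under intersection: if `D K = D N = A`, then in `A / D(K ∩ N)` the images of
`K` and `N` are the whole group and commute, so `[A, A] ≤ D(K ∩ N)`. If `D ≰ N` for a maximal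
normal subgroup `N` of `A`, then `D` supplements every `G`-conjugate of `N`, hence also the normal
core of `N` in `G`. That core is a proper `G`-invariant subgroup of `A`, so it lies in a maximal
one, which contains `D` as well: a contradiction.
-/

open scoped Pointwise

section

variable {G : Type*} [Group G]

def IsNormalIn (A B : Subgroup G) : Prop :=
  B ≤ A ∧ ∀ a ∈ A, ∀ b ∈ B, a * b * a⁻¹ ∈ B

lemma IsNormalIn.inf {A K N : Subgroup G} (hK : IsNormalIn A K) (hN : IsNormalIn A N) :
    IsNormalIn A (K ⊓ N) :=
  ⟨inf_le_left.trans hK.1, fun a ha _ hb => ⟨hK.2 a ha _ hb.1, hN.2 a ha _ hb.2⟩⟩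

lemma isNormalIn_iff {A B : Subgroup G} : IsNormalIn A B ↔ B ≤ A ∧ (B.subgroupOf A).Normal :=
  ⟨fun h => ⟨h.1, (Subgroup.normal_subgroupOf_iff h.1).2 fun _ a hb ha => h.2 a ha _ hb⟩,
    fun ⟨h, hn⟩ => ⟨h, fun a ha b hb => (Subgroup.normal_subgroupOf_iff h).1 hn b a hb ha⟩⟩

lemma IsNormalIn.sup {A K N : Subgroup G} (hK : IsNormalIn A K) (hN : IsNormalIn A N) :
    IsNormalIn A (K ⊔ N) := by
  have := (isNormalIn_iff.1 hK).2
  have := (isNormalIn_iff.1 hN).2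
  refine isNormalIn_iff.2 ⟨sup_le hK.1 hN.1, ?_⟩
  rw [Subgroup.subgroupOf_sup hK.1 hN.1]
  infer_instance

lemma isGInv_iff {A B : Subgroup G} : IsGInv G A B ↔ B ≤ A ∧ B.Normal :=
  ⟨fun h => ⟨h.1, ⟨fun b hb g => h.2 g b hb⟩⟩, fun h => ⟨h.1, fun g b hb => h.2.conj_mem b hb g⟩⟩

lemma exists_maximal_lt_ge [Finite G] (P : Subgroup G → Prop) {A C : Subgroup G} (hC : P C)
    (hCA : C < A) :
    ∃ B, (P B ∧ B < A ∧ ∀ X, P X → X < A → B ≤ X → B = X) ∧ C ≤ B := by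
  obtain ⟨B, hCB, hB⟩ := Finite.exists_le_maximal (p := fun X => P X ∧ X < A) ⟨hC, hCA⟩
  exact ⟨B, ⟨hB.1.1, hB.1.2, fun X hX hXA hBX => le_antisymm hBX (hB.2 ⟨hX, hXA⟩ hBX)⟩, hCB⟩

lemma commutator_le_sup_inf_of_sup_eq_top {P : Type*} [Group P] {H K N : Subgroup P}
    [H.Normal] [K.Normal] [N.Normal] (hHK : H ⊔ K = ⊤) (hHN : H ⊔ N = ⊤) :
    commutator P ≤ H ⊔ (K ⊓ N) := by
  set π := QuotientGroup.mk' (H ⊔ (K ⊓ N))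
  have hπ : Function.Surjective π := QuotientGroup.mk'_surjective _
  have hH : H.map π = ⊥ := by
    rw [Subgroup.map_eq_bot_iff, QuotientGroup.ker_mk']
    exact le_sup_left
  have map_eq_top : ∀ X : Subgroup P, H ⊔ X = ⊤ → X.map π = ⊤ := fun X hX => by
    rw [← bot_sup_eq (X.map π), ← hH, ← Subgroup.map_sup, hX, Subgroup.map_top_of_surjective π hπ]
  have hKN : ⁅K.map π, N.map π⁆ = ⊥ := by
    rw [← Subgroup.map_commutator, Subgroup.map_eq_bot_iff, QuotientGroup.ker_mk']
    exact (Subgroup.commutator_le_inf K N).trans le_sup_right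
  rw [map_eq_top K hHK, map_eq_top N hHN] at hKN
  rwa [← QuotientGroup.ker_mk' (H ⊔ (K ⊓ N)), ← Subgroup.map_eq_bot_iff, commutator_def,
    Subgroup.map_commutator, Subgroup.map_top_of_surjective π hπ]

lemma IsNormalIn.commutator_le_sup_inf {A H K N : Subgroup G} (hH : IsNormalIn A H)
    (hK : IsNormalIn A K) (hN : IsNormalIn A N) (hHK : H ⊔ K = A) (hHN : H ⊔ N = A) :
    ⁅A, A⁆ ≤ H ⊔ (K ⊓ N) := by
  have := (isNormalIn_iff.1 hH).2
  have := (isNormalIn_iff.1 hK).2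
  have := (isNormalIn_iff.1 hN).2
  have sup_eq_top : ∀ X, IsNormalIn A X → H ⊔ X = A → H.subgroupOf A ⊔ X.subgroupOf A = ⊤ :=
    fun X hX hHX => by rw [← Subgroup.subgroupOf_sup hH.1 hX.1, hHX, Subgroup.subgroupOf_self]
  rw [← Subgroup.map_subtype_commutator, Subgroup.map_le_iff_le_comap]
  calc commutator A
      ≤ H.subgroupOf A ⊔ (K.subgroupOf A ⊓ N.subgroupOf A) :=
        commutator_le_sup_inf_of_sup_eq_top (sup_eq_top K hK hHK) (sup_eq_top N hN hHN)
    _ = H.subgroupOf A ⊔ (K ⊓ N).subgroupOf A := by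
        simp only [Subgroup.subgroupOf, Subgroup.comap_inf]
    _ = (H ⊔ (K ⊓ N)).subgroupOf A := (Subgroup.subgroupOf_sup hH.1 (hK.inf hN).1).symm

lemma IsNormalIn.sup_inf_eq {A D K N : Subgroup G} (hperf : ⁅A, A⁆ ⊔ D = A)
    (hD : IsNormalIn A D) (hK : IsNormalIn A K) (hN : IsNormalIn A N) (hDK : D ⊔ K = A)
    (hDN : D ⊔ N = A) : D ⊔ (K ⊓ N) = A := by
  refine le_antisymm (sup_le hD.1 (inf_le_left.trans hK.1)) ?_
  calc A = ⁅A, A⁆ ⊔ D := hperf.symm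
    _ ≤ D ⊔ (K ⊓ N) := sup_le (hD.commutator_le_sup_inf hK hN hDK hDN) le_sup_left

lemma Subgroup.Normal.smul_lt {A B : Subgroup G} (hA : A.Normal) (hBA : B < A) (g : ConjAct G) :
    g • B < A := by
  rw [← hA.conjAct g]
  simpa only [lt_iff_le_not_ge, Subgroup.pointwise_smul_le_pointwise_smul_iff] using hBA

lemma IsNormalIn.smul {A B : Subgroup G} (hA : A.Normal) (hB : IsNormalIn A B) (g : ConjAct G) :
    IsNormalIn A (g • B) := by
  refine ⟨(Subgroup.pointwise_smul_le_pointwise_smul_iff.2 hB.1).trans_eq (hA.conjAct g), ?_⟩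
  intro a ha _ hb
  obtain ⟨b, hbB, rfl⟩ := (Subgroup.mem_smul_pointwise_iff_exists _ _ _).1 hb
  have ha' : g⁻¹ • a ∈ A := by
    rw [← Subgroup.mem_inv_pointwise_smul_iff, inv_inv, hA.conjAct]
    exact ha
  have := Subgroup.smul_mem_pointwise_smul _ g _ (hB.2 _ ha' b hbB)
  simpa [ConjAct.smul_def, mul_assoc] using this

lemma IsMaxNormalIn.smul {A N : Subgroup G} (hA : A.Normal) (hN : IsMaxNormalIn G A N)
    (g : ConjAct G) : IsMaxNormalIn G A (g • N) := by
  obtain ⟨hNA, hlt, hmax⟩ := hN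
  refine ⟨IsNormalIn.smul hA hNA g, hA.smul_lt hlt g, fun C hC hCA hNC => ?_⟩
  have hN_eq := hmax _ (IsNormalIn.smul hA hC g⁻¹) (hA.smul_lt hCA g⁻¹)
    (Subgroup.pointwise_smul_subset_iff.1 hNC)
  rw [hN_eq, smul_inv_smul]

lemma IsMaxNormalIn.sup_eq_of_not_le {A N X : Subgroup G} (hN : IsMaxNormalIn G A N)
    (hX : IsNormalIn A X) (hXN : ¬X ≤ N) : X ⊔ N = A := by
  by_contra hne
  have hsup : IsNormalIn A (X ⊔ N) := hX.sup hN.1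
  exact hXN ((hN.2.2 _ hsup (lt_of_le_of_ne hsup.1 hne) le_sup_right) ▸ le_sup_left)

lemma normal_sInf_of_smul_mem {S : Set (Subgroup G)} (hS : ∀ g : ConjAct G, ∀ N ∈ S, g • N ∈ S) :
    (sInf S).Normal :=
  ⟨fun x hx g => Subgroup.mem_sInf.2 fun N hN => by
    have := Subgroup.mem_sInf.1 hx _ (hS (ConjAct.toConjAct g)⁻¹ N hN)
    rwa [Subgroup.mem_inv_pointwise_smul_iff, ConjAct.toConjAct_smul] at this⟩

lemma exists_isMaxGInv_ge [Finite G] {A C : Subgroup G} [hC : C.Normal] (hCA : C < A) :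
    ∃ B, IsMaxGInv G A B ∧ C ≤ B :=
  exists_maximal_lt_ge _ (isGInv_iff.2 ⟨hCA.le, hC⟩) hCA

lemma exists_isMaxNormalIn_ge [Finite G] {A C : Subgroup G} (hC : IsNormalIn A C) (hCA : C < A) :
    ∃ N, IsMaxNormalIn G A N ∧ C ≤ N :=
  exists_maximal_lt_ge _ hC hCA

lemma MG_normal (A : Subgroup G) : (MG G A).Normal :=
  normal_sInf_of_smul_mem fun g _ hB => by rwa [(isGInv_iff.1 hB.1).2.conjAct g]

lemma MG_le_of_isMaxGInv {A B : Subgroup G} (hB : IsMaxGInv G A B) : MG G A ≤ B :=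
  sInf_le hB

lemma MG_le_self [Finite G] {A : Subgroup G} (hA : A ≠ ⊥) : MG G A ≤ A := by
  obtain ⟨B, hB, -⟩ := exists_isMaxGInv_ge (C := ⊥) (bot_lt_iff_ne_bot.2 hA)
  exact (MG_le_of_isMaxGInv hB).trans hB.1.1

lemma MG_le_of_isMaxNormalIn [Finite G] {A N : Subgroup G} (hA : A.Normal)
    (hperf : ⁅A, A⁆ ⊔ MG G A = A) (hN : IsMaxNormalIn G A N) : MG G A ≤ N := by
  set D := MG G A
  have hDn : D.Normal := MG_normal A
  by_contra hDN
  have hD : IsNormalIn A D :=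
    ⟨MG_le_self (bot_le.trans_lt hN.2.1).ne', fun a _ x hx => hDn.conj_mem x hx a⟩
  set supplements : Set (Subgroup G) := {X | IsNormalIn A X ∧ D ⊔ X = A}
  have hclosed : InfClosed supplements := fun X hX Y hY =>
    ⟨hX.1.inf hY.1, hD.sup_inf_eq hperf hX.1 hY.1 hX.2 hY.2⟩
  have hconj (g : ConjAct G) : g • N ∈ supplements := by
    refine ⟨IsNormalIn.smul hA hN.1 g, (hN.smul hA g).sup_eq_of_not_le hD fun hle => hDN ?_⟩
    rwa [← hDn.conjAct g, Subgroup.pointwise_smul_le_pointwise_smul_iff] at hle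
  have : Finite (ConjAct G) := Finite.of_equiv G ConjAct.toConjAct.toEquiv
  have hcore : D ⊔ N.normalCore = A := by
    rw [Subgroup.normalCore_eq_iInf_conjAct]
    exact (hclosed.iInf_mem_of_nonempty hconj).2
  obtain ⟨B, hB, hcoreB⟩ := exists_isMaxGInv_ge (N.normalCore_le.trans_lt hN.2.1)
  exact hB.2.1.not_ge (hcore ▸ sup_le (MG_le_of_isMaxGInv hB) hcoreB)

lemma Mel_le_of_isMaxGInv [Finite G] {A B : Subgroup G} (hA : A.Normal) (hB : IsMaxGInv G A B) :
    Mel G A ≤ B := by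
  obtain ⟨hBA, hBn⟩ := isGInv_iff.1 hB.1
  set S := {N | IsMaxNormalIn G A N ∧ B ≤ N}
  obtain ⟨N₀, hN₀, hBN₀⟩ :=
    exists_isMaxNormalIn_ge ⟨hBA, fun a _ b hb => hBn.conj_mem b hb a⟩ hB.2.1
  have hR : (sInf S).Normal := normal_sInf_of_smul_mem fun g N hN =>
    ⟨hN.1.smul hA g, (hBn.conjAct g).symm.trans_le
      (Subgroup.pointwise_smul_le_pointwise_smul_iff.2 hN.2)⟩
  have hRN₀ : sInf S ≤ N₀ := sInf_le ⟨hN₀, hBN₀⟩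
  have hBR : B = sInf S := hB.2.2 _ (isGInv_iff.2 ⟨hRN₀.trans hN₀.2.1.le, hR⟩)
    (hRN₀.trans_lt hN₀.2.1) (le_sInf fun _ hN => hN.2)
  exact hBR ▸ sInf_le_sInf fun _ hN => hN.1

end

theorem MG_eq_Mel_of_perfect_quotient_general (G : Type*) [Group G] [Finite G] (A : Subgroup G)
    (hA : A.Normal)
    (hperf : ⁅A, A⁆ ⊔ MG G A = A) :
    MG G A = Mel G A :=
  le_antisymm (le_sInf fun _ hN => MG_le_of_isMaxNormalIn hA hperf hN)
    (le_sInf fun _ hB => Mel_le_of_isMaxGInv hA hB)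

/-- If `A` is a nontrivial normal subgroup of a finite group `G` such that `A/M_G(A)` is
perfect, then `M_G(A) = M(A)`. -/
theorem MG_eq_Mel_of_perfect_quotient (G : Type*) [Group G] [Finite G] (A : Subgroup G)
    (hA : A.Normal) (hnt : A ≠ ⊥)
    (hperf : ⁅A, A⁆ ⊔ MG G A = A) :
    MG G A = Mel G A :=
  MG_eq_Mel_of_perfect_quotient_general G A hA hperf
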